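/- arXiv:1704.00212 — 6 statements merged into one kernel-verified Lean document; each statement's English description precedes it below -/
import Mathlib

section
/- The number of standard Young tableaux of rectangular shape (n,n,n) equals 2·(3n)! / (n!·(n+1)!·(n+2)!). -/
/-- A standard Young tableau of rectangular shape `(n,n,n)`, encoded (0-indexed) as a
filling `T : Fin 3 → Fin n → Fin (3*n)` that is strictly increasing along rows and
columns and bijective. -/
def IsSYT3 (n : ℕ) (T : Fin 3 → Fin n → Fin (3*n)) : Prop :=
  (∀ i : Fin 3, ∀ j k : Fin n, j < k → T i j < T i k) ∧
  (∀ j : Fin n, ∀ i k : Fin 3, i < k → T i j < T k j) ∧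
  Function.Bijective (fun p : Fin 3 × Fin n => T p.1 p.2)

/-!
Record, for each entry `t` of a standard Young tableau of shape `(n, n, n)`, the row containing
`t`. A filling with increasing rows is determined by this row word, and its columns increase exactly
when the word is a ballot word: every prefix contains at least as many `0`s as `1`s and at least as
many `1`s as `2`s. Deleting the last letter of a ballot word of content `(a, b, c)` removes a
corner of the shape `(a, b, c)`, so the number of such words obeys the recursion of the hook length
formula, which for three rows reads `(a+b+c)! (a-b+1) (b-c+1) (a-c+2) / ((a+2)! (b+1)! c!)`; this
expression obeys the same recursion by a polynomial identity, and at `a = b = c = n` it equals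
`2 (3n)! / (n! (n+1)! (n+2)!)`.
-/

open Finset Function
open scoped Nat

section Ballot
variable {ι : Type*} [Preorder ι] [DecidableEq ι] {l : List ι} {x : ι}

def IsBallot (l : List ι) : Prop := ∀ p ∈ l.inits, Antitone fun i => p.count i

lemma isBallot_nil : IsBallot ([] : List ι) := by simp [IsBallot, antitone_const]

lemma isBallot_append_singleton :
    IsBallot (l ++ [x]) ↔ IsBallot l ∧ Antitone fun i => (l ++ [x]).count i := by
  simp [IsBallot, List.inits_append, or_imp, forall_and]

lemma IsBallot.antitone_count (h : IsBallot l) : Antitone fun i => l.count i :=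
  h l (by simp)

lemma isBallot_iff_take : IsBallot l ↔ ∀ k, Antitone fun i => (l.take k).count i := by
  simp only [IsBallot, List.mem_inits]
  refine ⟨fun h k => h _ (List.take_prefix k l), fun h p hp => ?_⟩
  rw [List.prefix_iff_eq_take.1 hp]
  exact h _

end Ballot

lemma List.ncard_eq_sum_ncard_preimage_append_singleton {α : Type*} [Fintype α]
    {S : Set (List α)} (hS : S.Finite) (hnil : [] ∉ S) :
    S.ncard = ∑ x, ((· ++ [x]) ⁻¹' S).ncard := by
  have hcover : S = ⋃ x, (· ++ [x]) '' ((· ++ [x]) ⁻¹' S) := by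
    ext l
    rcases l.eq_nil_or_concat' with rfl | ⟨l, x, rfl⟩
    · simp [hnil]
    · simp
  rw [← finsum_eq_sum_of_fintype]
  nth_rw 1 [hcover]
  rw [Set.ncard_iUnion_of_finite (fun x => hS.subset (Set.image_preimage_subset _ _))]
  · congr! 2 with x
    exact Set.ncard_image_of_injective _ (List.append_left_injective _)
  · intro x y hxy
    simp only [onFun, Set.disjoint_left, Set.mem_image]
    rintro _ ⟨l, -, rfl⟩ ⟨l', -, h⟩
    exact hxy (List.singleton_inj.1 (List.append_inj' h rfl).2).symm

lemma List.count_take_ofFn {α : Type*} [DecidableEq α] {N : ℕ} (w : Fin N → α) (k : ℕ)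
    (x : α) :
    ((List.ofFn w).take k).count x = #{t : Fin N | (t : ℕ) < k ∧ w t = x} := by
  induction N generalizing k with
  | zero => simp
  | succ N ih =>
    cases k with
    | zero => simp
    | succ k =>
      rw [List.ofFn_succ, List.take_succ_cons, List.count_cons, ih, card_filter, card_filter,
        Fin.sum_univ_succ]
      simp [add_comm]

lemma List.count_ofFn {α : Type*} [DecidableEq α] {N : ℕ} (w : Fin N → α) (x : α) :
    (List.ofFn w).count x = #{t | w t = x} := by
  rw [← List.take_length (l := List.ofFn w), count_take_ofFn]
  simp

lemma forall_le_iff_card_filter_lt_le {α : Type*} [LinearOrder α] {n : ℕ} {f g : Fin n → α}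
    (hf : StrictMono f) (hg : StrictMono g) :
    (∀ j, f j ≤ g j) ↔ ∀ x, #{j | g j < x} ≤ #{j | f j < x} := by
  refine ⟨fun h x => card_le_card fun j => by simpa using (h j).trans_lt, fun h => ?_⟩
  by_contra! ⟨j, hj⟩
  have hlt : #{j' | f j' < f j} = j := by
    simp [hf.lt_iff_lt, filter_gt_eq_Iio]
  have hle : (j : ℕ) + 1 ≤ #{j' | g j' < f j} := by
    calc (j : ℕ) + 1 = #{j' | j' ≤ j} := by simp [filter_ge_eq_Iic]
      _ ≤ _ := card_le_card fun j' => by simpa using fun h' => (hg.monotone h').trans_lt hj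
  have := h (f j)
  omega

lemma Fin.antitone_three_iff {α : Type*} [Preorder α] {f : Fin 3 → α} :
    Antitone f ↔ f 2 ≤ f 1 ∧ f 1 ≤ f 0 := by
  simp [Fin.antitone_iff_succ_le, Fin.forall_fin_two, and_comm]

lemma List.length_eq_count_fin_three (l : List (Fin 3)) :
    l.length = l.count 0 + l.count 1 + l.count 2 := by
  induction l with
  | nil => rfl
  | cons x l ih => fin_cases x <;> simp [ih] <;> omega

def ballotWords (a b c : ℕ) : Set (List (Fin 3)) :=
  {l | IsBallot l ∧ l.count 0 = a ∧ l.count 1 = b ∧ l.count 2 = c}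

noncomputable def ballotCount (a b c : ℕ) : ℕ := (ballotWords a b c).ncard

lemma ballotWords_finite (a b c : ℕ) : (ballotWords a b c).Finite :=
  (List.finite_length_eq (Fin 3) (a + b + c)).subset fun l ⟨_, h0, h1, h2⟩ => by
    simp [List.length_eq_count_fin_three, h0, h1, h2]

section BallotWords
variable {a b c : ℕ}

lemma ballotWords_zero : ballotWords 0 0 0 = {[]} := by
  ext l
  constructor
  · rintro ⟨-, h0, h1, h2⟩
    exact List.length_eq_zero_iff.1 (by rw [List.length_eq_count_fin_three, h0, h1, h2])
  · rintro rfl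
    exact ⟨isBallot_nil, rfl, rfl, rfl⟩

lemma ballotWords_eq_empty (h : ¬(c ≤ b ∧ b ≤ a)) : ballotWords a b c = ∅ := by
  refine Set.eq_empty_of_forall_notMem fun l ⟨hl, h0, h1, h2⟩ => h ?_
  simpa [h0, h1, h2] using Fin.antitone_three_iff.1 hl.antitone_count

lemma nil_notMem_ballotWords (h : a ≠ 0) : [] ∉ ballotWords a b c :=
  fun ⟨_, h0, _⟩ => h h0.symm

lemma preimage_append_zero_ballotWords :
    (· ++ [0]) ⁻¹' ballotWords (a + 1) b c = ballotWords a b c := by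
  ext l
  have := fun hl : IsBallot l => Fin.antitone_three_iff.1 hl.antitone_count
  simp only [ballotWords, Set.mem_preimage, Set.mem_ofPred_eq, isBallot_append_singleton,
    Fin.antitone_three_iff, List.count_append, List.count_singleton]
  grind

lemma preimage_append_one_ballotWords (h : b < a) :
    (· ++ [1]) ⁻¹' ballotWords a (b + 1) c = ballotWords a b c := by
  ext l
  have := fun hl : IsBallot l => Fin.antitone_three_iff.1 hl.antitone_count
  simp only [ballotWords, Set.mem_preimage, Set.mem_ofPred_eq, isBallot_append_singleton,
    Fin.antitone_three_iff, List.count_append, List.count_singleton]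
  grind

lemma preimage_append_two_ballotWords (h : c < b) :
    (· ++ [2]) ⁻¹' ballotWords a b (c + 1) = ballotWords a b c := by
  ext l
  have := fun hl : IsBallot l => Fin.antitone_three_iff.1 hl.antitone_count
  simp only [ballotWords, Set.mem_preimage, Set.mem_ofPred_eq, isBallot_append_singleton,
    Fin.antitone_three_iff, List.count_append, List.count_singleton]
  grind

lemma preimage_append_one_ballotWords_zero : (· ++ [1]) ⁻¹' ballotWords a 0 c = ∅ := by
  ext l; simp [ballotWords]

lemma preimage_append_two_ballotWords_zero : (· ++ [2]) ⁻¹' ballotWords a b 0 = ∅ := by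
  ext l; simp [ballotWords]

lemma ballotCount_eq_sum (ha : a ≠ 0) :
    ballotCount a b c = ∑ x, ((· ++ [x]) ⁻¹' ballotWords a b c).ncard :=
  List.ncard_eq_sum_ncard_preimage_append_singleton (ballotWords_finite a b c)
    (nil_notMem_ballotWords ha)

lemma ballotCount_zero : ballotCount 0 0 0 = 1 := by
  simp [ballotCount, ballotWords_zero]

lemma ballotCount_eq_zero (h : ¬(c ≤ b ∧ b ≤ a)) : ballotCount a b c = 0 := by
  simp [ballotCount, ballotWords_eq_empty h]

lemma ballotCount_succ_zero_zero : ballotCount (a + 1) 0 0 = ballotCount a 0 0 := by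
  rw [ballotCount_eq_sum a.succ_ne_zero, Fin.sum_univ_three, preimage_append_zero_ballotWords,
    preimage_append_one_ballotWords_zero, preimage_append_two_ballotWords_zero]
  simp [ballotCount]

lemma ballotCount_succ_succ_zero (h : b ≤ a) :
    ballotCount (a + 1) (b + 1) 0 = ballotCount a (b + 1) 0 + ballotCount (a + 1) b 0 := by
  rw [ballotCount_eq_sum a.succ_ne_zero, Fin.sum_univ_three, preimage_append_zero_ballotWords,
    preimage_append_one_ballotWords (by omega), preimage_append_two_ballotWords_zero]
  simp [ballotCount]

lemma ballotCount_succ_succ_succ (hcb : c ≤ b) (hba : b ≤ a) :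
    ballotCount (a + 1) (b + 1) (c + 1) =
      ballotCount a (b + 1) (c + 1) + ballotCount (a + 1) b (c + 1) +
        ballotCount (a + 1) (b + 1) c := by
  rw [ballotCount_eq_sum a.succ_ne_zero, Fin.sum_univ_three, preimage_append_zero_ballotWords,
    preimage_append_one_ballotWords (by omega), preimage_append_two_ballotWords (by omega)]
  rfl

end BallotWords

noncomputable def hookCount (a b c : ℕ) : ℚ :=
  (a + b + c)! * ((a - b + 1) * (b - c + 1) * (a - c + 2)) / ((a + 2)! * (b + 1)! * c !)

lemma hookCount_zero : hookCount 0 0 0 = 1 := by norm_num [hookCount]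

lemma hookCount_self_succ_left (a c : ℕ) : hookCount a (a + 1) c = 0 := by
  simp [hookCount]

lemma hookCount_self_succ_right (a b : ℕ) : hookCount a b (b + 1) = 0 := by
  simp [hookCount]

lemma hookCount_succ_zero_zero (a : ℕ) : hookCount (a + 1) 0 0 = hookCount a 0 0 := by
  simp only [hookCount, add_zero, Nat.factorial_succ]
  push_cast
  field_simp
  ring

lemma hookCount_succ_succ_zero (a b : ℕ) :
    hookCount (a + 1) (b + 1) 0 = hookCount a (b + 1) 0 + hookCount (a + 1) b 0 := by
  simp only [hookCount, add_zero, show a + 1 + (b + 1) = a + b + 1 + 1 by ring,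
    show a + (b + 1) = a + b + 1 by ring, show a + 1 + b = a + b + 1 by ring, Nat.factorial_succ]
  push_cast
  field_simp
  ring

lemma hookCount_succ_succ_succ (a b c : ℕ) :
    hookCount (a + 1) (b + 1) (c + 1) =
      hookCount a (b + 1) (c + 1) + hookCount (a + 1) b (c + 1) + hookCount (a + 1) (b + 1) c := by
  simp only [hookCount, show a + 1 + (b + 1) + (c + 1) = a + b + c + 2 + 1 by ring,
    show a + (b + 1) + (c + 1) = a + b + c + 1 + 1 by ring,
    show a + 1 + b + (c + 1) = a + b + c + 1 + 1 by ring,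
    show a + 1 + (b + 1) + c = a + b + c + 1 + 1 by ring, Nat.factorial_succ]
  push_cast
  field_simp
  ring

-- The shapes with `b = a + 1` or `c = b + 1`, where both sides vanish, are included because the
-- recursion steps out of the dominance region onto them.
theorem ballotCount_eq_hookCount (a b c : ℕ) (hcb : c ≤ b + 1) (hba : b ≤ a + 1) :
    (ballotCount a b c : ℚ) = hookCount a b c := by
  by_cases hdom : c ≤ b ∧ b ≤ a
  swap
  · obtain rfl | rfl : b = a + 1 ∨ c = b + 1 := by omega
    · rw [ballotCount_eq_zero hdom, hookCount_self_succ_left, Nat.cast_zero]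
    · rw [ballotCount_eq_zero hdom, hookCount_self_succ_right, Nat.cast_zero]
  obtain ⟨hcb, hba⟩ := hdom
  match a, b, c, hcb, hba with
  | 0, 0, 0, _, _ => simp [ballotCount_zero, hookCount_zero]
  | a + 1, 0, 0, _, _ =>
    rw [ballotCount_succ_zero_zero, hookCount_succ_zero_zero,
      ballotCount_eq_hookCount a 0 0 (by omega) (by omega)]
  | a + 1, b + 1, 0, _, hba =>
    rw [ballotCount_succ_succ_zero (by omega), hookCount_succ_succ_zero, Nat.cast_add,
      ballotCount_eq_hookCount a (b + 1) 0 (by omega) (by omega),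
      ballotCount_eq_hookCount (a + 1) b 0 (by omega) (by omega)]
  | a + 1, b + 1, c + 1, hcb, hba =>
    rw [ballotCount_succ_succ_succ (by omega) (by omega), hookCount_succ_succ_succ, Nat.cast_add,
      Nat.cast_add, ballotCount_eq_hookCount a (b + 1) (c + 1) (by omega) (by omega),
      ballotCount_eq_hookCount (a + 1) b (c + 1) (by omega) (by omega),
      ballotCount_eq_hookCount (a + 1) (b + 1) c (by omega) (by omega)]
termination_by a + b + c

lemma ballotCount_mul_factorial (n : ℕ) :
    ballotCount n n n * (n ! * (n + 1)! * (n + 2)!) = 2 * (3 * n)! := by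
  have h := ballotCount_eq_hookCount n n n (by omega) (by omega)
  rw [hookCount, show n + n + n = 3 * n by ring] at h
  rw [← Nat.cast_inj (R := ℚ)]
  push_cast
  rw [h]
  field_simp
  ring

section RowWord
variable {ι : Type*} {n N : ℕ} {T : ι → Fin n → Fin N}

noncomputable def rowWord (hT : Bijective fun p : ι × Fin n => T p.1 p.2) (t : Fin N) : ι :=
  ((Equiv.ofBijective _ hT).symm t).1

lemma injective_row (hT : Injective fun p : ι × Fin n => T p.1 p.2) (i : ι) : Injective (T i) :=
  fun j j' h => congrArg Prod.snd (@hT (i, j) (i, j') h)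

variable (hT : Bijective fun p : ι × Fin n => T p.1 p.2)

lemma rowWord_apply (i : ι) (j : Fin n) : rowWord hT (T i j) = i :=
  congrArg Prod.fst ((Equiv.ofBijective _ hT).symm_apply_apply (i, j))

lemma range_eq_preimage_rowWord (i : ι) : Set.range (T i) = rowWord hT ⁻¹' {i} := by
  ext t
  obtain ⟨⟨i', j⟩, rfl⟩ := hT.2 t
  simp only [Set.mem_range, Set.mem_preimage, Set.mem_singleton_iff, rowWord_apply]
  refine ⟨fun ⟨j', h⟩ => (congrArg Prod.fst (@hT.1 (i, j') (i', j) h)).symm, ?_⟩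
  rintro rfl
  exact ⟨j, rfl⟩

lemma card_filter_rowWord [DecidableEq ι] (k : ℕ) (i : ι) :
    #{t : Fin N | (t : ℕ) < k ∧ rowWord hT t = i} = #{j | (T i j : ℕ) < k} := by
  rw [← card_image_of_injective _ (injective_row hT.1 i)]
  congr 1
  ext t
  rw [mem_filter, ← Set.mem_singleton_iff, ← Set.mem_preimage, ← range_eq_preimage_rowWord hT i]
  simp only [mem_univ, true_and, Set.mem_range, mem_image, mem_filter]
  grind

lemma count_ofFn_rowWord [DecidableEq ι] (i : ι) : (List.ofFn (rowWord hT)).count i = n := by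
  rw [← List.take_length (l := List.ofFn _), List.count_take_ofFn, card_filter_rowWord]
  simp

lemma isBallot_ofFn_rowWord_iff [LinearOrder ι] (hrow : ∀ i, StrictMono (T i)) :
    IsBallot (List.ofFn (rowWord hT)) ↔ ∀ j (i i' : ι), i < i' → T i j < T i' j := by
  have hcol (i i' : ι) (hii' : i < i') :
      (∀ k, #{j | (T i' j : ℕ) < k} ≤ #{j | (T i j : ℕ) < k}) ↔ ∀ j, T i j < T i' j := by
    rw [← forall_le_iff_card_filter_lt_le (f := fun j => (T i j : ℕ))
      (g := fun j => (T i' j : ℕ)) (hrow i) (hrow i')]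
    refine forall_congr' fun j => ?_
    have hne : T i j ≠ T i' j := fun h => hii'.ne (congrArg Prod.fst (@hT.1 (i, j) (i', j) h))
    simp [Fin.val_fin_le, hne.le_iff_lt]
  simp only [isBallot_iff_take, List.count_take_ofFn, card_filter_rowWord, antitone_iff_forall_lt]
  exact ⟨fun h j i i' hii' => (hcol i i' hii').1 (fun k => h k hii') j,
    fun h k i i' hii' => (hcol i i' hii').2 (fun j => h j i i' hii') k⟩

lemma exists_rowWord_eq [Fintype ι] [DecidableEq ι] (w : Fin N → ι)
    (hw : ∀ i, #{t | w t = i} = n) :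
    ∃ (T : ι → Fin n → Fin N) (_ : ∀ i, StrictMono (T i))
      (hT : Bijective fun p : ι × Fin n => T p.1 p.2), rowWord hT = w := by
  set T : ι → Fin n → Fin N := fun i => ({t | w t = i} : Finset _).orderEmbOfFin (hw i)
  have hwT : ∀ i j, w (T i j) = i := fun i j => (mem_filter.1 (orderEmbOfFin_mem _ (hw i) j)).2
  have hT : Bijective fun p : ι × Fin n => T p.1 p.2 := by
    refine ⟨fun ⟨i, j⟩ ⟨i', j'⟩ h => ?_, fun t => ?_⟩
    · obtain rfl : i = i' := (hwT i j).symm.trans ((congrArg w h).trans (hwT i' j'))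
      exact congrArg _ ((orderEmbOfFin _ (hw i)).injective h)
    · have : t ∈ Set.range (T (w t)) := by simp [T, range_orderEmbOfFin]
      obtain ⟨j, hj⟩ := this
      exact ⟨(w t, j), hj⟩
  refine ⟨T, fun i => (orderEmbOfFin _ (hw i)).strictMono, hT, funext fun t => ?_⟩
  obtain ⟨⟨i, j⟩, rfl⟩ := hT.2 t
  rw [rowWord_apply, hwT]

end RowWord

variable {n : ℕ}

noncomputable def syt3Word (T : {T : Fin 3 → Fin n → Fin (3 * n) // IsSYT3 n T}) :
    List (Fin 3) :=
  List.ofFn (rowWord T.2.2.2)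

lemma syt3Word_injective : Injective (syt3Word (n := n)) := by
  rintro ⟨T, hT⟩ ⟨T', hT'⟩ h
  have hw : rowWord hT.2.2 = rowWord hT'.2.2 := List.ofFn_injective h
  refine Subtype.ext (funext fun i => ?_)
  refine (StrictMono.range_inj (fun _ _ => hT.1 i _ _) (fun _ _ => hT'.1 i _ _)).1 ?_
  rw [range_eq_preimage_rowWord hT.2.2, range_eq_preimage_rowWord hT'.2.2, hw]

lemma range_syt3Word : Set.range (syt3Word (n := n)) = ballotWords n n n := by
  ext l
  constructor
  · rintro ⟨⟨T, hT⟩, rfl⟩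
    exact ⟨(isBallot_ofFn_rowWord_iff hT.2.2 fun i _ _ => hT.1 i _ _).2 hT.2.1,
      count_ofFn_rowWord hT.2.2 0, count_ofFn_rowWord hT.2.2 1, count_ofFn_rowWord hT.2.2 2⟩
  · rintro ⟨hbal, h0, h1, h2⟩
    have hlen : l.length = 3 * n := by rw [List.length_eq_count_fin_three]; omega
    set w : Fin (3 * n) → Fin 3 := fun t => l[(t : ℕ)]
    have hwl : List.ofFn w = l := List.ext_getElem (by simp [hlen]) (by simp [w])
    have hw : ∀ i, #{t | w t = i} = n := by
      intro i
      rw [← List.count_ofFn, hwl]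
      fin_cases i <;> assumption
    obtain ⟨T, hrow, hT, hTw⟩ := exists_rowWord_eq w hw
    refine ⟨⟨T, fun i => hrow i, ?_, hT⟩, ?_⟩
    · rw [← isBallot_ofFn_rowWord_iff hT hrow, hTw, hwl]
      exact hbal
    · rw [syt3Word, hTw, hwl]

lemma card_syt3_eq_ballotCount (n : ℕ) :
    Nat.card {T : Fin 3 → Fin n → Fin (3 * n) // IsSYT3 n T} = ballotCount n n n := by
  rw [ballotCount, ← range_syt3Word, ← Nat.card_coe_set_eq,
    Nat.card_range_of_injective syt3Word_injective]

theorem card_SYT3 (n : ℕ) :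
    Nat.card {T : Fin 3 → Fin n → Fin (3*n) // IsSYT3 n T} =
      2 * (3*n).factorial / (n.factorial * (n+1).factorial * (n+2).factorial) := by
  rw [card_syt3_eq_ballotCount, ← ballotCount_mul_factorial, Nat.mul_div_cancel _ (by positivity)]
end

section
/- The number 2·(3n)!/(n!·(n+1)!·(n+2)!) is a positive integer for every natural number n; i.e., n!·(n+1)!·(n+2)! divides 2·(3n)!. -/
open Finset

/-- Key floor inequality for moduli `m ≥ 3`. -/
lemma threeDim_key (m n : ℕ) (hm : 3 ≤ m) :
    n / m + (n + 1) / m + (n + 2) / m ≤ 3 * n / m := by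
  have hm0 : 0 < m := by omega
  obtain ⟨q, r, hr, rfl⟩ : ∃ q r, r < m ∧ n = m * q + r :=
    ⟨n / m, n % m, Nat.mod_lt _ hm0, (Nat.div_add_mod n m).symm⟩
  have h1 : (m * q + r) / m = q + r / m := Nat.mul_add_div hm0 _ _
  have h2 : (m * q + r + 1) / m = q + (r + 1) / m := by
    rw [add_assoc]; exact Nat.mul_add_div hm0 _ _
  have h3 : (m * q + r + 2) / m = q + (r + 2) / m := by
    rw [add_assoc]; exact Nat.mul_add_div hm0 _ _
  have h4 : 3 * (m * q + r) / m = 3 * q + 3 * r / m := by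
    have : 3 * (m * q + r) = m * (3 * q) + 3 * r := by ring
    rw [this]; exact Nat.mul_add_div hm0 _ _
  rw [h1, h2, h3, h4, Nat.div_eq_of_lt hr]
  have key : (r + 1) / m + (r + 2) / m ≤ 3 * r / m := by
    by_cases hc : r + 3 ≤ m
    · rw [Nat.div_eq_of_lt (by omega), Nat.div_eq_of_lt (by omega)]
      exact Nat.zero_le _
    · by_cases hc2 : r + 2 = m
      · rw [Nat.div_eq_of_lt (by omega), hc2, Nat.div_self hm0,
           Nat.le_div_iff_mul_le hm0]
        omega
      · have hc1 : r + 1 = m := by omega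
        have e1 : (r + 1) / m = 1 := by rw [hc1, Nat.div_self hm0]
        have e2 : (r + 2) / m = 1 := by
          have h5 : r + 2 = m * 1 + 1 := by omega
          rw [h5, Nat.mul_add_div hm0, Nat.div_eq_of_lt (by omega)]
        rw [e1, e2, Nat.le_div_iff_mul_le hm0]
        omega
  omega

/-- The `n`-th 3-dimensional Catalan number `2·(3n)! / (n!·(n+1)!·(n+2)!)` is a positive
integer: the denominator divides `2·(3n)!`, and the quotient is positive. -/
theorem threeDimCatalan_int_pos (n : ℕ) :
    (n.factorial * (n+1).factorial * (n+2).factorial) ∣ 2 * (3*n).factorial ∧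
    0 < 2 * (3*n).factorial / (n.factorial * (n+1).factorial * (n+2).factorial) := by
  have hd : (n.factorial * (n+1).factorial * (n+2).factorial) ≠ 0 := by positivity
  have hN : 2 * (3*n).factorial ≠ 0 := by positivity
  have hdvd : (n.factorial * (n+1).factorial * (n+2).factorial) ∣ 2 * (3*n).factorial := by
    rw [← Nat.factorization_le_iff_dvd hd hN, Finsupp.le_def]
    intro p
    by_cases hp : p.Prime
    · haveI : Fact p.Prime := ⟨hp⟩
      set b : ℕ := 3 * n + 3 with hb
      have hlog : ∀ m : ℕ, m ≤ 3 * n + 2 → Nat.log p m < b := fun m hm =>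
        lt_of_le_of_lt (le_trans (Nat.log_le_self p m) hm) (by omega)
      rw [Nat.factorization_mul (by positivity) (by positivity),
          Nat.factorization_mul (by positivity) (by positivity),
          Nat.factorization_mul (by positivity) (by positivity),
          Finsupp.add_apply, Finsupp.add_apply, Finsupp.add_apply,
          Nat.factorization_def _ hp, Nat.factorization_def _ hp,
          Nat.factorization_def _ hp, Nat.factorization_def _ hp,
          Nat.factorization_def _ hp,
          padicValNat_factorial (p := p) (b := b) (hlog n (by omega)),
          padicValNat_factorial (p := p) (b := b) (hlog (n+1) (by omega)),
          padicValNat_factorial (p := p) (b := b) (hlog (n+2) (by omega)),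
          padicValNat_factorial (p := p) (b := b) (hlog (3*n) (by omega))]
      rw [← Finset.sum_add_distrib, ← Finset.sum_add_distrib]
      by_cases hp2 : p = 2
      · subst hp2
        have hv2 : padicValNat 2 2 = 1 := padicValNat.self (by norm_num)
        rw [hv2]
        have h1b : 1 < b := by omega
        rw [Finset.sum_eq_sum_Ico_succ_bot h1b, Finset.sum_eq_sum_Ico_succ_bot h1b
          (f := fun i => 3 * n / 2 ^ i)]
        have hfirst : n / 2 ^ 1 + (n + 1) / 2 ^ 1 + (n + 2) / 2 ^ 1 ≤ 1 + 3 * n / 2 ^ 1 := by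
          simp only [pow_one]; omega
        have hrest : ∑ i ∈ Ico (1+1) b, (n / 2 ^ i + (n + 1) / 2 ^ i + (n + 2) / 2 ^ i) ≤
            ∑ i ∈ Ico (1+1) b, 3 * n / 2 ^ i := by
          apply Finset.sum_le_sum
          intro i hi
          have hi2 : 2 ≤ i := by have := (Finset.mem_Ico.mp hi).1; omega
          refine threeDim_key _ _ ?_
          calc (3:ℕ) ≤ 2 ^ 2 := by norm_num
            _ ≤ 2 ^ i := Nat.pow_le_pow_right (by norm_num) hi2
        omega
      · have hv : padicValNat p 2 = 0 := by
          rw [padicValNat.eq_zero_iff]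
          right; right
          exact fun h => hp2 ((Nat.prime_dvd_prime_iff_eq hp Nat.prime_two).mp h)
        rw [hv, zero_add]
        apply Finset.sum_le_sum
        intro i hi
        have hi1 : 1 ≤ i := (Finset.mem_Ico.mp hi).1
        refine threeDim_key _ _ ?_
        have hp3 : 3 ≤ p := by
          rcases hp.eq_one_or_self_of_dvd 1 ⟨p, (one_mul p).symm⟩ with h | h <;>
          · have := hp.two_le; omega
        calc (3:ℕ) ≤ p := hp3
          _ = p ^ 1 := (pow_one p).symm
          _ ≤ p ^ i := Nat.pow_le_pow_right hp.pos hi1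
    · rw [Nat.factorization_eq_zero_of_not_prime _ hp]
      exact Nat.zero_le _
  refine ⟨hdvd, Nat.div_pos (Nat.le_of_dvd (by positivity) hdvd) (by positivity)⟩
end

section
/- Let σ be an up-down permutation of size 2n (descent set {2,4,...,2n−2}). Then σ avoids 1234 if and only if: (a) the sequence of peak values (values at even positions) avoids 123; (b) the sequence of valley values (values at odd positions) avoids 123; (c) for every valley value k, every peak value smaller than k occurs at a position to the right of k in σ; and (d) for every valley value k having a smaller valley value to its left, the peak values greater than k occurring to the right of k appear in decreasing order in σ. -/
/-- Up-down permutation of size `2n` (0-indexed): ascents at even positions, descents at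
odd positions.  Valleys are the values at 0-indexed even positions, peaks the values at
0-indexed odd positions. -/
def UpDown (n : ℕ) (σ : Equiv.Perm (Fin (2*n))) : Prop :=
  ∀ i j : Fin (2*n), (j : ℕ) = (i : ℕ) + 1 →
    ((i : ℕ) % 2 = 0 → σ i < σ j) ∧ ((i : ℕ) % 2 = 1 → σ j < σ i)

/-- `σ` avoids the pattern `1234`. -/
def Avoids1234 {m : ℕ} (σ : Equiv.Perm (Fin m)) : Prop :=
  ¬ ∃ i₁ i₂ i₃ i₄ : Fin m, i₁ < i₂ ∧ i₂ < i₃ ∧ i₃ < i₄ ∧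
      σ i₁ < σ i₂ ∧ σ i₂ < σ i₃ ∧ σ i₃ < σ i₄

section Aux

variable {n : ℕ} {σ : Equiv.Perm (Fin (2*n))}

/-- An even index is not the last one. -/
lemma aux_bnd (i : Fin (2*n)) (hi : (i : ℕ) % 2 = 0) : (i : ℕ) + 1 < 2*n := by
  have := i.isLt; omega

/-- Ascent from an even position. -/
lemma aux_asc (hud : UpDown n σ) (i : Fin (2*n)) (hi : (i : ℕ) % 2 = 0) :
    σ i < σ ⟨(i : ℕ) + 1, aux_bnd i hi⟩ :=
  (hud i ⟨(i : ℕ) + 1, aux_bnd i hi⟩ rfl).1 hi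

/-- Ascent into an odd position. -/
lemma aux_desc (hud : UpDown n σ) (i : Fin (2*n)) (hi : (i : ℕ) % 2 = 1) :
    σ ⟨(i : ℕ) - 1, by have := i.isLt; omega⟩ < σ i :=
  (hud ⟨(i : ℕ) - 1, by have := i.isLt; omega⟩ i (by simp; omega)).1 (by simp; omega)

end Aux

/-- Characterization: an up-down permutation avoids `1234` iff (a) the peak subsequence
avoids `123`, (b) the valley subsequence avoids `123`, (c) every peak value smaller than
a valley value `σ p` occurs to the right of position `p`, and (d) if a valley has a
smaller valley to its left, then the peak values greater than it occurring to its right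
appear in decreasing order. -/
theorem avoids1234_iff_four_conditions (n : ℕ) (σ : Equiv.Perm (Fin (2*n)))
    (hud : UpDown n σ) :
    Avoids1234 σ ↔
      ((¬ ∃ p q r : Fin (2*n), p < q ∧ q < r ∧
          (p : ℕ) % 2 = 1 ∧ (q : ℕ) % 2 = 1 ∧ (r : ℕ) % 2 = 1 ∧
          σ p < σ q ∧ σ q < σ r) ∧
       (¬ ∃ p q r : Fin (2*n), p < q ∧ q < r ∧
          (p : ℕ) % 2 = 0 ∧ (q : ℕ) % 2 = 0 ∧ (r : ℕ) % 2 = 0 ∧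
          σ p < σ q ∧ σ q < σ r) ∧
       (∀ p q : Fin (2*n), (p : ℕ) % 2 = 0 → (q : ℕ) % 2 = 1 →
          σ q < σ p → p < q) ∧
       (∀ p : Fin (2*n), (p : ℕ) % 2 = 0 →
          (∃ p' : Fin (2*n), (p' : ℕ) % 2 = 0 ∧ p' < p ∧ σ p' < σ p) →
          ∀ q r : Fin (2*n), (q : ℕ) % 2 = 1 → (r : ℕ) % 2 = 1 →
            p < q → q < r → σ p < σ q → σ p < σ r → σ r < σ q)) := by
  constructor
  · intro h
    refine ⟨?_, ?_, ?_, ?_⟩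
    · rintro ⟨p, q, r, hpq, hqr, hp, hq, hr, h1, h2⟩
      exact h ⟨⟨(p : ℕ) - 1, by have := p.isLt; omega⟩, p, q, r,
        by simp [Fin.lt_def]; omega, hpq, hqr, aux_desc hud p hp, h1, h2⟩
    · rintro ⟨p, q, r, hpq, hqr, hp, hq, hr, h1, h2⟩
      exact h ⟨p, q, r, ⟨(r : ℕ) + 1, aux_bnd r hr⟩,
        hpq, hqr, by simp [Fin.lt_def], h1, h2, aux_asc hud r hr⟩
    · intro p q hp hq hv
      by_contra hpq
      have hne : (q : ℕ) ≠ (p : ℕ) := by omega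
      have hqp : q < p := by
        rcases lt_or_ge q p with h' | h'
        · exact h'
        · exact absurd (lt_of_le_of_ne h' (Fin.ne_of_val_ne (show (p:ℕ) ≠ (q:ℕ) by omega))) hpq
      exact h ⟨⟨(q : ℕ) - 1, by have := q.isLt; omega⟩, q, p,
        ⟨(p : ℕ) + 1, aux_bnd p hp⟩,
        by simp [Fin.lt_def]; omega, hqp, by simp [Fin.lt_def],
        aux_desc hud q hq, hv, aux_asc hud p hp⟩
    · rintro p hp ⟨p', hp', hlt, hv⟩ q r hq hr hpq hqr h1 h2
      by_contra hnr
      have hqr' : σ q < σ r := by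
        refine lt_of_le_of_ne (not_lt.mp hnr) ?_
        intro he
        exact absurd (σ.injective he) (Fin.ne_of_lt hqr)
      exact h ⟨p', p, q, r, hlt, hpq, hqr, hv, h1, hqr'⟩
  · rintro ⟨ha, hb, hc, hd⟩ ⟨i1, i2, i3, i4, h12, h23, h34, v12, v23, v34⟩
    -- key: no increasing chain with first index even and last odd
    have key : ∀ j1 j2 j3 j4 : Fin (2*n), j1 < j2 → j2 < j3 → j3 < j4 →
        σ j1 < σ j2 → σ j2 < σ j3 → σ j3 < σ j4 →
        (j1 : ℕ) % 2 = 0 → (j4 : ℕ) % 2 = 1 → False := by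
      intro j1 j2 j3 j4 h12 h23 h34 v12 v23 v34 e1 e4
      rcases Nat.mod_two_eq_zero_or_one (j2 : ℕ) with e2 | e2 <;>
        rcases Nat.mod_two_eq_zero_or_one (j3 : ℕ) with e3 | e3
      ·
        exact hb ⟨j1, j2, j3, h12, h23, e1, e2, e3, v12, v23⟩
      · -- eeoo-ish: j2 even, j3 odd, j4 odd: use (d)
        exact absurd v34
          (asymm (hd j2 e2 ⟨j1, e1, h12, v12⟩ j3 j4 e3 e4 h23 h34 v23 (v23.trans v34)))
      · -- j2 odd, j3 even: peak value σ j2 < valley value σ j3, (c) gives j3 < j2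
        exact absurd (hc j3 j2 e3 e2 v23) (asymm h23)
      · -- j2, j3, j4 odd: (a)
        exact ha ⟨j2, j3, j4, h23, h34, e2, e3, e4, v23, v34⟩
    -- normalize i1 to even, i4 to odd
    have step4 : ∀ j1 j2 j3 j4 : Fin (2*n), j1 < j2 → j2 < j3 → j3 < j4 →
        σ j1 < σ j2 → σ j2 < σ j3 → σ j3 < σ j4 → (j1 : ℕ) % 2 = 0 → False := by
      intro j1 j2 j3 j4 h12 h23 h34 v12 v23 v34 e1
      rcases Nat.mod_two_eq_zero_or_one (j4 : ℕ) with e4 | e4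
      · refine key j1 j2 j3 ⟨(j4 : ℕ) + 1, aux_bnd j4 e4⟩ h12 h23
          (by simp [Fin.lt_def]; omega) v12 v23 (v34.trans (aux_asc hud j4 e4)) e1 ?_
        simp; omega
      · exact key j1 j2 j3 j4 h12 h23 h34 v12 v23 v34 e1 e4
    rcases Nat.mod_two_eq_zero_or_one (i1 : ℕ) with e1 | e1
    · exact step4 i1 i2 i3 i4 h12 h23 h34 v12 v23 v34 e1
    · refine step4 ⟨(i1 : ℕ) - 1, by have := i1.isLt; omega⟩ i2 i3 i4
        (by simp [Fin.lt_def]; omega) h23 h34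
        ((aux_desc hud i1 e1).trans v12) v23 v34 ?_
      simp; omega
end

section
/- Let σ be a permutation of {1,...,n−1} avoiding 123, and let τ be its maximal decreasing prefix (of length t, so t ≥ 1 and t = n−1 if σ is decreasing). Inserting the value n into σ at position p (producing a permutation of {1,...,n}) yields a permutation avoiding 123 if and only if p ≤ t+1. -/
/-- Insert the new maximal value (`Fin.last m`) into the one-line word of `σ` at
(0-indexed) position `p`, producing a word of length `m+1`. -/
def insertTop {m : ℕ} (σ : Equiv.Perm (Fin m)) (p : Fin (m+1)) :
    Fin (m+1) → Fin (m+1) := fun i =>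
  if h1 : (i : ℕ) < (p : ℕ) then
    (σ ⟨(i : ℕ), by have hp := p.isLt; omega⟩).castSucc
  else if h2 : (i : ℕ) = (p : ℕ) then Fin.last m
  else (σ ⟨(i : ℕ) - 1, by have hi := i.isLt; omega⟩).castSucc

lemma insertTop_of_lt {m : ℕ} (σ : Equiv.Perm (Fin m)) (p i : Fin (m+1))
    (h : (i : ℕ) < (p : ℕ)) :
    insertTop σ p i = (σ ⟨(i : ℕ), by have := p.isLt; omega⟩).castSucc := by
  unfold insertTop; rw [dif_pos h]

lemma insertTop_of_eq {m : ℕ} (σ : Equiv.Perm (Fin m)) (p i : Fin (m+1))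
    (h : (i : ℕ) = (p : ℕ)) : insertTop σ p i = Fin.last m := by
  unfold insertTop; rw [dif_neg (by omega), dif_pos h]

lemma insertTop_of_gt {m : ℕ} (σ : Equiv.Perm (Fin m)) (p i : Fin (m+1))
    (h : (p : ℕ) < (i : ℕ)) :
    insertTop σ p i = (σ ⟨(i : ℕ) - 1, by have := i.isLt; omega⟩).castSucc := by
  unfold insertTop; rw [dif_neg (by omega), dif_neg (by omega)]

/-- Let `σ` be a `123`-avoiding permutation of size `m` with maximal decreasing prefix
of length `t` (so `1 ≤ t`, with `t = m` iff `σ` is decreasing).  Inserting the largest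
value at (0-indexed) position `p` yields a `123`-avoiding word iff `p ≤ t`
(1-indexed: position `≤ t+1`). -/
theorem insertTop_avoids123_iff (m : ℕ) (σ : Equiv.Perm (Fin m)) (t : ℕ)
    (ht1 : 1 ≤ t) (htm : t ≤ m)
    (hdec : ∀ i j : Fin m, (i : ℕ) < (j : ℕ) → (j : ℕ) < t → σ j < σ i)
    (hmax : ∀ h : t < m, σ ⟨t - 1, by omega⟩ < σ ⟨t, h⟩)
    (havoid : ¬ ∃ i j k : Fin m, i < j ∧ j < k ∧ σ i < σ j ∧ σ j < σ k)
    (p : Fin (m+1)) :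
    (¬ ∃ i j k : Fin (m+1), i < j ∧ j < k ∧
        insertTop σ p i < insertTop σ p j ∧ insertTop σ p j < insertTop σ p k) ↔
      (p : ℕ) ≤ t := by
  constructor
  · intro hA
    by_contra hp
    push_neg at hp
    have htm' : t < m := by have := p.isLt; omega
    refine hA ⟨⟨t-1, by omega⟩, ⟨t, by omega⟩, p, ?_, ?_, ?_, ?_⟩
    · exact Fin.mk_lt_mk.mpr (by omega)
    · rw [Fin.lt_def]; exact hp
    · rw [insertTop_of_lt σ p _ (show t - 1 < (p:ℕ) by omega),
        insertTop_of_lt σ p _ (show t < (p:ℕ) by omega)]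
      exact Fin.castSucc_lt_castSucc_iff.mpr (hmax htm')
    · rw [insertTop_of_lt σ p _ (show t < (p:ℕ) by omega),
        insertTop_of_eq σ p p rfl]
      exact Fin.castSucc_lt_last _
  · rintro hp ⟨i, j, k, hij, hjk, h1, h2⟩
    rw [Fin.lt_def] at hij hjk
    have hkm := k.isLt
    have hjm := j.isLt
    have hip : (i : ℕ) ≠ (p : ℕ) := by
      intro he
      rw [insertTop_of_eq σ p i he] at h1
      exact absurd (h1.trans_le (Fin.le_last _)) (lt_irrefl _)
    have hjp : (j : ℕ) ≠ (p : ℕ) := by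
      intro he
      rw [insertTop_of_eq σ p j he] at h2
      exact absurd (h2.trans_le (Fin.le_last _)) (lt_irrefl _)
    rcases lt_trichotomy (j : ℕ) (p : ℕ) with hj | hj | hj
    · -- j < p ≤ t : contradiction with decreasing prefix
      have hi : (i : ℕ) < (p : ℕ) := lt_trans hij hj
      rw [insertTop_of_lt σ p i hi, insertTop_of_lt σ p j hj,
        Fin.castSucc_lt_castSucc_iff] at h1
      exact absurd h1 (not_lt_of_gt (hdec _ _ hij (show (j:ℕ) < t by omega)))
    · exact hjp hj
    · -- j > p, hence k > p
      have hk : (p : ℕ) < (k : ℕ) := lt_trans hj hjk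
      rw [insertTop_of_gt σ p j hj, insertTop_of_gt σ p k hk,
        Fin.castSucc_lt_castSucc_iff] at h2
      rcases lt_trichotomy (i : ℕ) (p : ℕ) with hi | hi | hi
      · rw [insertTop_of_lt σ p i hi, insertTop_of_gt σ p j hj,
          Fin.castSucc_lt_castSucc_iff] at h1
        exact havoid ⟨_, _, _, Fin.mk_lt_mk.mpr (by omega),
          Fin.mk_lt_mk.mpr (by omega), h1, h2⟩
      · exact absurd hi hip
      · rw [insertTop_of_gt σ p i hi, insertTop_of_gt σ p j hj,
          Fin.castSucc_lt_castSucc_iff] at h1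
        exact havoid ⟨_, _, _, Fin.mk_lt_mk.mpr (by omega),
          Fin.mk_lt_mk.mpr (by omega), h1, h2⟩
end

section
/- The set of permutations of {1,...,n} avoiding the pattern 123 is in bijection with the set of non-decreasing parking functions of length n, i.e., non-decreasing functions f : {1,...,n} → {0,...,n−1} with f(i) ≤ i−1 for all i. -/
/-- `σ` avoids the pattern `123`. -/
def Avoids123 {m : ℕ} (σ : Equiv.Perm (Fin m)) : Prop :=
  ¬ ∃ i j k : Fin m, i < j ∧ j < k ∧ σ i < σ j ∧ σ j < σ k


namespace AP

lemma maxD_mem {s : Finset ℕ} (h : s.Nonempty) : s.max.getD 0 ∈ s := by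
  obtain ⟨a, ha⟩ := Finset.max_of_nonempty h
  rw [ha]; exact Finset.mem_of_max ha

lemma le_maxD {s : Finset ℕ} {x : ℕ} (hx : x ∈ s) : x ≤ s.max.getD 0 := by
  obtain ⟨a, ha⟩ := Finset.max_of_nonempty ⟨x, hx⟩
  rw [ha]
  have := Finset.le_max hx
  rw [ha] at this
  exact_mod_cast this

lemma minD_mem {s : Finset ℕ} (h : s.Nonempty) : s.min.getD 0 ∈ s := by
  obtain ⟨a, ha⟩ := Finset.min_of_nonempty h
  rw [ha]; exact Finset.mem_of_min ha

lemma minD_le {s : Finset ℕ} {x : ℕ} (hx : x ∈ s) : s.min.getD 0 ≤ x := by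
  obtain ⟨a, ha⟩ := Finset.min_of_nonempty ⟨x, hx⟩
  rw [ha]
  have := Finset.min_le hx
  rw [ha] at this
  exact_mod_cast this

def unusedF (n : ℕ) (L : List ℕ) : Finset ℕ :=
  (Finset.range n).filter (fun x => x ∉ L)

def maxU (n : ℕ) (L : List ℕ) : ℕ := (unusedF n L).max.getD 0

def buildL (m : ℕ → ℕ) (n : ℕ) : ℕ → List ℕ
  | 0 => []
  | i+1 =>
    let prev := buildL m n i
    prev ++ [if m i ∈ prev then maxU n prev else m i]

def V (m : ℕ → ℕ) (n : ℕ) (i : ℕ) : ℕ :=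
  if m i ∈ buildL m n i then maxU n (buildL m n i) else m i

lemma buildL_succ (m : ℕ → ℕ) (n i : ℕ) :
    buildL m n (i+1) = buildL m n i ++ [V m n i] := rfl

lemma buildL_eq_map (m : ℕ → ℕ) (n i : ℕ) :
    buildL m n i = (List.range i).map (V m n) := by
  induction i with
  | zero => rfl
  | succ i ih => rw [buildL_succ, ih, List.range_succ, List.map_append]; rfl

lemma mem_buildL {m : ℕ → ℕ} {n x i : ℕ} :
    x ∈ buildL m n i ↔ ∃ j < i, V m n j = x := by
  rw [buildL_eq_map]; simp

lemma length_buildL (m : ℕ → ℕ) (n i : ℕ) : (buildL m n i).length = i := by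
  rw [buildL_eq_map]; simp

lemma unused_nonempty {n : ℕ} {L : List ℕ} (h : L.length < n) : (unusedF n L).Nonempty := by
  by_contra hne
  rw [Finset.not_nonempty_iff_eq_empty] at hne
  rw [unusedF, Finset.filter_eq_empty_iff] at hne
  have hsub : Finset.range n ⊆ L.toFinset := fun x hx => List.mem_toFinset.2 (not_not.1 (hne hx))
  have h1 := Finset.card_le_card hsub
  have h2 := L.toFinset_card_le
  simp at h1
  omega


section
variable {m : ℕ → ℕ} {n : ℕ}

lemma maxU_gt (hmb : ∀ i, i < n → m i + i < n) {i : ℕ} (hi : i < n)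
    (hmem : m i ∈ buildL m n i) : m i < maxU n (buildL m n i) := by
  set L := buildL m n i with hL
  have hlen : L.length = i := length_buildL m n i
  have hmi : m i ∈ L.toFinset := List.mem_toFinset.2 hmem
  have hbound := hmb i hi
  -- the set of unused values greater than m i is nonempty
  have hsub : Finset.Ioo (m i) n \ L.toFinset ⊆ unusedF n L := by
    intro x hx
    rw [Finset.mem_sdiff, Finset.mem_Ioo] at hx
    refine Finset.mem_filter.2 ⟨Finset.mem_range.2 hx.1.2, ?_⟩
    exact fun hxL => hx.2 (List.mem_toFinset.2 hxL)
  have heq : Finset.Ioo (m i) n \ L.toFinset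
      = Finset.Ioo (m i) n \ (L.toFinset.erase (m i)) := by
    ext x
    simp only [Finset.mem_sdiff, Finset.mem_Ioo, Finset.mem_erase]
    constructor
    · rintro ⟨⟨h1, h2⟩, h3⟩; exact ⟨⟨h1, h2⟩, fun h => h3 h.2⟩
    · rintro ⟨⟨h1, h2⟩, h3⟩; exact ⟨⟨h1, h2⟩, fun h => h3 ⟨Nat.ne_of_gt h1, h⟩⟩
  have hcard1 : (Finset.Ioo (m i) n).card = n - (m i) - 1 := by
    rw [Nat.card_Ioo]
  have hcard2 : (L.toFinset.erase (m i)).card ≤ i - 1 := by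
    rw [Finset.card_erase_of_mem hmi]
    have := L.toFinset_card_le
    omega
  have hge := Finset.le_card_sdiff (L.toFinset.erase (m i)) (Finset.Ioo (m i) n)
  have hi1 : 1 ≤ L.toFinset.card := Finset.card_pos.2 ⟨m i, hmi⟩
  have hle : L.toFinset.card ≤ i := by
    have := L.toFinset_card_le; omega
  have hne : (Finset.Ioo (m i) n \ L.toFinset).Nonempty := by
    rw [heq, ← Finset.card_pos]
    omega
  obtain ⟨x, hx⟩ := hne
  have hx1 : m i < x := (Finset.mem_Ioo.1 (Finset.mem_sdiff.1 hx).1).1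
  exact lt_of_lt_of_le hx1 (le_maxD (hsub hx))

lemma m_le_V (hmb : ∀ i, i < n → m i + i < n) {i : ℕ} (hi : i < n) :
    m i ≤ V m n i := by
  unfold V
  split
  · exact le_of_lt (maxU_gt hmb hi ‹_›)
  · exact le_refl _

lemma V_notMem {i : ℕ} (hi : i < n) : V m n i ∉ buildL m n i := by
  unfold V
  split
  · have hne := unused_nonempty (n := n) (L := buildL m n i)
      (by rw [length_buildL]; exact hi)
    have := maxD_mem hne
    exact (Finset.mem_filter.1 this).2
  · assumption

lemma V_lt (hmb : ∀ i, i < n → m i + i < n) {i : ℕ} (hi : i < n) : V m n i < n := by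
  unfold V
  split
  · have hne := unused_nonempty (n := n) (L := buildL m n i)
      (by rw [length_buildL]; exact hi)
    exact Finset.mem_range.1 (Finset.mem_filter.1 (maxD_mem hne)).1
  · have := hmb i hi; omega

lemma V_inj {p q : ℕ} (hpq : p < q) (hq : q < n) : V m n p ≠ V m n q := by
  intro h
  exact V_notMem hq (mem_buildL.2 ⟨p, hpq, h⟩)

lemma unused_anti {p q : ℕ} (hpq : p ≤ q) :
    unusedF n (buildL m n q) ⊆ unusedF n (buildL m n p) := by
  intro x hx
  rw [unusedF, Finset.mem_filter] at hx ⊢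
  refine ⟨hx.1, fun hmem => hx.2 ?_⟩
  obtain ⟨j, hj, hjx⟩ := mem_buildL.1 hmem
  exact mem_buildL.2 ⟨j, lt_of_lt_of_le hj hpq, hjx⟩

lemma V_fill {i : ℕ} (h : V m n i ≠ m i) :
    m i ∈ buildL m n i ∧ V m n i = maxU n (buildL m n i) := by
  by_cases hc : m i ∈ buildL m n i
  · exact ⟨hc, by unfold V; rw [if_pos hc]⟩
  · exact absurd (by unfold V; rw [if_neg hc]) h

lemma fills_dec {p q : ℕ} (hpq : p < q) (hq : q < n)
    (hp' : V m n p ≠ m p) (hq' : V m n q ≠ m q) : V m n q < V m n p := by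
  obtain ⟨hpm, hpv⟩ := V_fill hp'
  obtain ⟨hqm, hqv⟩ := V_fill hq'
  have hne := unused_nonempty (n := n) (L := buildL m n q)
    (by rw [length_buildL]; exact hq)
  have hmem : V m n q ∈ unusedF n (buildL m n q) := by rw [hqv]; exact maxD_mem hne
  have this : V m n q ≤ maxU n (buildL m n p) := le_maxD (unused_anti (le_of_lt hpq) hmem)
  rw [← hpv] at this
  exact lt_of_le_of_ne this (Ne.symm (V_inj hpq hq))

lemma exists_attain {p : ℕ} (_hp : p < n) : ∃ q ≤ p, V m n q = m p := by
  by_cases h : m p ∈ buildL m n p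
  · obtain ⟨j, hj, hjv⟩ := mem_buildL.1 h
    exact ⟨j, le_of_lt hj, hjv⟩
  · exact ⟨p, le_refl _, by unfold V; rw [if_neg h]⟩

end
section Phi
variable {n : ℕ}

/-- the target prefix-minimum sequence associated to a parking function -/
def mOf (n : ℕ) (f : Fin n → Fin n) : ℕ → ℕ :=
  fun i => if h : i < n then (f ⟨n - 1 - i, by omega⟩ : ℕ) else 0

lemma mOf_bound {f : Fin n → Fin n} (hb : ∀ i : Fin n, (f i : ℕ) ≤ (i : ℕ)) :
    ∀ i, i < n → mOf n f i + i < n := by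
  intro i hi
  rw [mOf, dif_pos hi]
  have := hb ⟨n - 1 - i, by omega⟩
  simp at this
  omega

lemma mOf_anti {f : Fin n → Fin n} (hf : Monotone f) :
    ∀ p q : ℕ, p ≤ q → q < n → mOf n f q ≤ mOf n f p := by
  intro p q hpq hq
  rw [mOf, mOf, dif_pos hq, dif_pos (lt_of_le_of_lt hpq hq)]
  exact hf (by simp [Fin.le_def]; omega)

/-- the permutation associated to a parking function -/
def permF (f : Fin n → Fin n) (hb : ∀ i : Fin n, (f i : ℕ) ≤ (i : ℕ)) :
    Fin n → Fin n :=
  fun i => ⟨V (mOf n f) n i, V_lt (mOf_bound hb) i.2⟩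

lemma permF_inj (f : Fin n → Fin n) (hb : ∀ i : Fin n, (f i : ℕ) ≤ (i : ℕ)) :
    Function.Injective (permF f hb) := by
  intro a b hab
  have h : V (mOf n f) n a = V (mOf n f) n b := congrArg Fin.val hab
  by_contra hne
  rcases Nat.lt_or_ge (a : ℕ) (b : ℕ) with hlt | hge
  · exact V_inj hlt b.2 h
  · have hlt : (b : ℕ) < (a : ℕ) := by
      rcases Nat.lt_or_ge (b : ℕ) (a : ℕ) with h' | h'
      · exact h'
      · exact absurd (Fin.ext (le_antisymm h' hge)) hne
    exact V_inj hlt a.2 h.symm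

noncomputable def permOf (f : Fin n → Fin n) (hb : ∀ i : Fin n, (f i : ℕ) ≤ (i : ℕ)) :
    Equiv.Perm (Fin n) :=
  Equiv.ofBijective (permF f hb) (Finite.injective_iff_bijective.1 (permF_inj f hb))

lemma permOf_apply (f : Fin n → Fin n) (hb : ∀ i : Fin n, (f i : ℕ) ≤ (i : ℕ)) (i : Fin n) :
    ((permOf f hb i : Fin n) : ℕ) = V (mOf n f) n i := rfl

lemma permOf_avoids (f : Fin n → Fin n) (hf : Monotone f)
    (hb : ∀ i : Fin n, (f i : ℕ) ≤ (i : ℕ)) : Avoids123 (permOf f hb) := by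
  rintro ⟨i, j, k, hij, hjk, h1, h2⟩
  rw [Fin.lt_def] at hij hjk h1 h2
  rw [permOf_apply, permOf_apply] at h1 h2
  set M := mOf n f with hM
  have hanti := mOf_anti (f := f) hf
  have hmb := mOf_bound (f := f) hb
  have hjf : V M n j ≠ M j := by
    intro hvm
    have : M j ≤ M i := hanti i j (le_of_lt hij) j.2
    have : M i ≤ V M n i := m_le_V hmb i.2
    omega
  have hkf : V M n k ≠ M k := by
    intro hvm
    have : M k ≤ M j := hanti j k (le_of_lt hjk) k.2
    have : M j ≤ V M n j := m_le_V hmb j.2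
    omega
  have := fills_dec hjk k.2 hjf hkf
  omega

lemma permOf_injective_param {f g : Fin n → Fin n}
    (hfm : Monotone f) (hfb : ∀ i : Fin n, (f i : ℕ) ≤ (i : ℕ))
    (hgm : Monotone g) (hgb : ∀ i : Fin n, (g i : ℕ) ≤ (i : ℕ))
    (h : permOf f hfb = permOf g hgb) : f = g := by
  have hV : ∀ i : Fin n, V (mOf n f) n i = V (mOf n g) n i := by
    intro i
    have := congrArg (fun e => ((e : Equiv.Perm (Fin n)) i : ℕ)) h
    simpa [permOf_apply] using this
  -- prefix minima coincide, hence f = g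
  have key : ∀ (f g : Fin n → Fin n), Monotone f → (∀ i : Fin n, (f i : ℕ) ≤ (i : ℕ)) →
      Monotone g → (∀ i : Fin n, (g i : ℕ) ≤ (i : ℕ)) →
      (∀ i : Fin n, V (mOf n f) n i = V (mOf n g) n i) →
      ∀ i : Fin n, (f i : ℕ) ≤ (g i : ℕ) := by
    intro f g hfm hfb hgm hgb hV i
    set p := n - 1 - (i : ℕ) with hp
    have hpn : p < n := by have := i.2; omega
    obtain ⟨q, hq, hqv⟩ := exists_attain (m := mOf n g) (n := n) hpn
    have h1 : mOf n f p ≤ mOf n f q := mOf_anti hfm q p hq hpn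
    have h2 : mOf n f q ≤ V (mOf n f) n q := m_le_V (mOf_bound hfb) (lt_of_le_of_lt hq hpn)
    have h3 : V (mOf n f) n q = V (mOf n g) n q := hV ⟨q, lt_of_le_of_lt hq hpn⟩
    have hip : (⟨n - 1 - p, by omega⟩ : Fin n) = i := by
      apply Fin.ext
      have := i.2
      simp only []
      omega
    have hfi : mOf n f p = (f i : ℕ) := by
      rw [mOf, dif_pos hpn, hip]
    have hgi : mOf n g p = (g i : ℕ) := by
      rw [mOf, dif_pos hpn, hip]
    rw [← hfi, ← hgi, ← hqv]
    omega
  funext i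
  exact Fin.ext (le_antisymm (key f g hfm hfb hgm hgb hV i)
    (key g f hgm hgb hfm hfb (fun i => (hV i).symm) i))

end Phi
section Psi
variable {n : ℕ}

/-- the permutation as a function on ℕ (identity above `n`) -/
def sOf (σ : Equiv.Perm (Fin n)) : ℕ → ℕ :=
  fun j => if h : j < n then (σ ⟨j, h⟩ : ℕ) else j

lemma sOf_lt {σ : Equiv.Perm (Fin n)} {j : ℕ} (hj : j < n) : sOf σ j < n := by
  rw [sOf, dif_pos hj]; exact (σ ⟨j, hj⟩).2

lemma sOf_inj {σ : Equiv.Perm (Fin n)} {a b : ℕ} (ha : a < n) (hb : b < n)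
    (h : sOf σ a = sOf σ b) : a = b := by
  rw [sOf, sOf, dif_pos ha, dif_pos hb] at h
  have := σ.injective (Fin.ext h)
  exact congrArg Fin.val this

/-- prefix minimum of the permutation -/
def MOf (σ : Equiv.Perm (Fin n)) (p : ℕ) : ℕ :=
  ((Finset.range (p + 1)).image (sOf σ)).min.getD 0

lemma MOf_le {σ : Equiv.Perm (Fin n)} {j p : ℕ} (hj : j ≤ p) :
    MOf σ p ≤ sOf σ j :=
  minD_le (Finset.mem_image.2 ⟨j, Finset.mem_range.2 (by omega), rfl⟩)

lemma MOf_attained {σ : Equiv.Perm (Fin n)} (p : ℕ) :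
    ∃ j ≤ p, sOf σ j = MOf σ p := by
  have hne : ((Finset.range (p + 1)).image (sOf σ)).Nonempty :=
    ⟨sOf σ 0, Finset.mem_image.2 ⟨0, Finset.mem_range.2 (by omega), rfl⟩⟩
  obtain ⟨j, hj, hjv⟩ := Finset.mem_image.1 (minD_mem hne)
  exact ⟨j, by have := Finset.mem_range.1 hj; omega, hjv⟩

lemma MOf_anti {σ : Equiv.Perm (Fin n)} {p q : ℕ} (hpq : p ≤ q) :
    MOf σ q ≤ MOf σ p := by
  obtain ⟨j, hj, hjv⟩ := MOf_attained (σ := σ) p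
  rw [← hjv]
  exact MOf_le (le_trans hj hpq)

lemma MOf_bound {σ : Equiv.Perm (Fin n)} {p : ℕ} (hp : p < n) :
    MOf σ p + p < n := by
  set S := (Finset.range (p + 1)).image (sOf σ) with hS
  have hcard : S.card = p + 1 := by
    rw [hS, Finset.card_image_of_injOn, Finset.card_range]
    intro a ha b hb hab
    exact sOf_inj (by have := Finset.mem_range.1 ha; omega)
      (by have := Finset.mem_range.1 hb; omega) hab
  have hsub : S ⊆ Finset.Ico (MOf σ p) n := by
    intro x hx
    obtain ⟨j, hj, hjv⟩ := Finset.mem_image.1 hx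
    have hjp : j ≤ p := by have := Finset.mem_range.1 hj; omega
    rw [Finset.mem_Ico, ← hjv]
    exact ⟨MOf_le hjp, sOf_lt (by omega)⟩
  have := Finset.card_le_card hsub
  rw [hcard, Nat.card_Ico] at this
  omega

/-- the parking function associated to a permutation -/
def FOf (σ : Equiv.Perm (Fin n)) : Fin n → Fin n :=
  fun i => ⟨MOf σ (n - 1 - (i : ℕ)), by
    have h := MOf_bound (σ := σ) (p := n - 1 - (i : ℕ)) (by have := i.2; omega)
    omega⟩

lemma FOf_monotone (σ : Equiv.Perm (Fin n)) : Monotone (FOf σ) := by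
  intro a b hab
  rw [Fin.le_def] at hab ⊢
  exact MOf_anti (by omega)

lemma FOf_bound (σ : Equiv.Perm (Fin n)) : ∀ i : Fin n, ((FOf σ) i : ℕ) ≤ (i : ℕ) := by
  intro i
  have h := MOf_bound (σ := σ) (p := n - 1 - (i : ℕ)) (by have := i.2; omega)
  have := i.2
  simp only [FOf]
  omega

/-- the key uniqueness formula for 123-avoiding permutations -/
lemma sOf_formula {σ : Equiv.Perm (Fin n)} (hσ : Avoids123 σ) {i : ℕ} (hi : i < n) :
    sOf σ i = if MOf σ i ∈ (Finset.range i).image (sOf σ)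
      then (Finset.range n \ (Finset.range i).image (sOf σ)).max.getD 0
      else MOf σ i := by
  set prev := (Finset.range i).image (sOf σ) with hprev
  have hmem : MOf σ i ∈ (Finset.range (i + 1)).image (sOf σ) := by
    obtain ⟨j, hj, hjv⟩ := MOf_attained (σ := σ) i
    exact Finset.mem_image.2 ⟨j, Finset.mem_range.2 (by omega), hjv⟩
  have hsplit : (Finset.range (i + 1)).image (sOf σ) = insert (sOf σ i) prev := by
    rw [Finset.range_add_one, Finset.image_insert]
  by_cases hc : MOf σ i ∈ prev
  · rw [if_pos hc]
    obtain ⟨j, hj, hjv⟩ := Finset.mem_image.1 hc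
    have hji : j < i := Finset.mem_range.1 hj
    set D := Finset.range n \ prev with hD
    have hsi_notmem : sOf σ i ∉ prev := by
      intro hmem'
      obtain ⟨k, hk, hkv⟩ := Finset.mem_image.1 hmem'
      have hki : k < i := Finset.mem_range.1 hk
      have := sOf_inj (by omega) hi hkv
      omega
    have hsiD : sOf σ i ∈ D := Finset.mem_sdiff.2 ⟨Finset.mem_range.2 (sOf_lt hi), hsi_notmem⟩
    have hle : sOf σ i ≤ D.max.getD 0 := le_maxD hsiD
    rcases eq_or_lt_of_le hle with heq | hlt
    · exact heq
    · exfalso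
      -- the max unused value u appears later, giving a 123 pattern
      set u := D.max.getD 0 with hu
      have huD : u ∈ D := maxD_mem ⟨sOf σ i, hsiD⟩
      have hun : u < n := Finset.mem_range.1 (Finset.mem_sdiff.1 huD).1
      have hunotprev : u ∉ prev := (Finset.mem_sdiff.1 huD).2
      obtain ⟨k, hk⟩ := σ.surjective ⟨u, hun⟩
      have hku : sOf σ (k : ℕ) = u := by
        rw [sOf, dif_pos k.2]
        exact congrArg Fin.val hk
      have hki : i < (k : ℕ) := by
        rcases Nat.lt_or_ge (k : ℕ) i with h' | h'
        · exact absurd (Finset.mem_image.2 ⟨(k : ℕ), Finset.mem_range.2 h', hku⟩) hunotprev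
        · rcases eq_or_lt_of_le h' with h'' | h''
          · exfalso; rw [← h''] at hku; omega
          · exact h''
      have hMlt : MOf σ i < sOf σ i := by
        have h1 : MOf σ i ≤ sOf σ i := MOf_le (le_refl i)
        rcases eq_or_lt_of_le h1 with h2 | h2
        · exfalso
          have := sOf_inj (by omega) hi (hjv.trans h2)
          omega
        · exact h2
      -- positions j < i < k give a 123 pattern
      apply hσ
      refine ⟨⟨j, by omega⟩, ⟨i, hi⟩, k, ?_, ?_, ?_, ?_⟩
      · rw [Fin.lt_def]; exact hji
      · rw [Fin.lt_def]; exact hki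
      · rw [Fin.lt_def]
        have e1 : (σ ⟨j, by omega⟩ : ℕ) = sOf σ j := by rw [sOf, dif_pos (by omega : j < n)]
        have e2 : (σ ⟨i, hi⟩ : ℕ) = sOf σ i := by rw [sOf, dif_pos hi]
        omega
      · rw [Fin.lt_def]
        have e2 : (σ ⟨i, hi⟩ : ℕ) = sOf σ i := by rw [sOf, dif_pos hi]
        have e3 : (σ k : ℕ) = sOf σ (k : ℕ) := by rw [sOf, dif_pos k.2]
        omega
  · rw [if_neg hc]
    rw [hsplit] at hmem
    rcases Finset.mem_insert.1 hmem with h | h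
    · exact h.symm
    · exact absurd h hc

/-- a 123-avoiding permutation is determined by its prefix minima -/
lemma psi_inj {σ τ : Equiv.Perm (Fin n)} (hσ : Avoids123 σ) (hτ : Avoids123 τ)
    (h : FOf σ = FOf τ) : σ = τ := by
  have hM : ∀ p, p < n → MOf σ p = MOf τ p := by
    intro p hp
    have := congrFun h ⟨n - 1 - p, by omega⟩
    have hval := congrArg Fin.val this
    simp only [FOf] at hval
    have hidx : n - 1 - (n - 1 - p) = p := by omega
    rwa [hidx] at hval
  have hs : ∀ i, i < n → sOf σ i = sOf τ i := by
    intro i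
    induction i using Nat.strong_induction_on with
    | _ i ih =>
      intro hi
      have hprev : (Finset.range i).image (sOf σ) = (Finset.range i).image (sOf τ) := by
        apply Finset.image_congr
        intro x hx
        exact ih x (Finset.mem_range.1 (by simpa using hx)) (by
          have := Finset.mem_range.1 (by simpa using hx); omega)
      have hMi : MOf σ i = MOf τ i := hM i hi
      rw [sOf_formula hσ hi, sOf_formula hτ hi, hprev, hMi]
  apply Equiv.ext
  intro x
  apply Fin.ext
  have := hs (x : ℕ) x.2
  rw [sOf, sOf, dif_pos x.2, dif_pos x.2] at this
  simpa using this

end Psi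
end AP

/-- The `123`-avoiding permutations of `{1,…,n}` are in bijection with the
non-decreasing parking functions of length `n`, i.e. non-decreasing functions
`f : Fin n → Fin n` with `f i ≤ i` (0-indexed form of `f(i) ≤ i−1`). -/
theorem avoids123_equiv_parkingFunctions (n : ℕ) :
    Nonempty ({σ : Equiv.Perm (Fin n) // Avoids123 σ} ≃
      {f : Fin n → Fin n // Monotone f ∧ ∀ i : Fin n, (f i : ℕ) ≤ (i : ℕ)}) := by
  classical
  have hA : Fintype {σ : Equiv.Perm (Fin n) // Avoids123 σ} := Fintype.ofFinite _
  have hB : Fintype {f : Fin n → Fin n // Monotone f ∧ ∀ i : Fin n, (f i : ℕ) ≤ (i : ℕ)} :=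
    Fintype.ofFinite _
  let Φ : {f : Fin n → Fin n // Monotone f ∧ ∀ i : Fin n, (f i : ℕ) ≤ (i : ℕ)} →
      {σ : Equiv.Perm (Fin n) // Avoids123 σ} :=
    fun f => ⟨AP.permOf f.1 f.2.2, AP.permOf_avoids f.1 f.2.1 f.2.2⟩
  have hΦ : Function.Injective Φ := by
    rintro ⟨f, hf⟩ ⟨g, hg⟩ h
    exact Subtype.ext (AP.permOf_injective_param hf.1 hf.2 hg.1 hg.2
      (congrArg Subtype.val h))
  let Ψ : {σ : Equiv.Perm (Fin n) // Avoids123 σ} →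
      {f : Fin n → Fin n // Monotone f ∧ ∀ i : Fin n, (f i : ℕ) ≤ (i : ℕ)} :=
    fun σ => ⟨AP.FOf σ.1, AP.FOf_monotone σ.1, AP.FOf_bound σ.1⟩
  have hΨ : Function.Injective Ψ := by
    rintro ⟨σ, hσ⟩ ⟨τ, hτ⟩ h
    exact Subtype.ext (AP.psi_inj hσ hτ (congrArg Subtype.val h))
  exact Fintype.card_eq.1 (le_antisymm (Fintype.card_le_of_injective Ψ hΨ)
    (Fintype.card_le_of_injective Φ hΦ))
end

section
/- Define the shifted concatenation σ ∙ τ of permutations σ of size m and τ of size k as the permutation of size m+k whose first k values are τ(1)+m,...,τ(k)+m and whose last m values are σ(1),...,σ(m). Then ∙ is associative, the empty permutation is a two-sided identity, and if σ and τ are both up-down permutations of even sizes avoiding 1234, then σ ∙ τ is an up-down permutation avoiding 1234. -/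
/-!
In `sc σ τ` the shifted copy of `τ` comes first and every one of its entries exceeds every entry
of `σ`, because `σ` is a permutation of `{0, …, |σ| - 1}`. Hence an increasing subsequence cannot
pass from the first block into the second, so a `1234` pattern would lie inside one block, where
it is excluded since shifting preserves the relative order. The only new adjacent pair is at the
junction: it sits at the odd position `|τ| - 1`, where a descent is required, and it is one by
the same comparison of blocks.
-/

/-- A list is (the one-line notation, 0-indexed values, of) a permutation of its
index set. -/
def IsPermList (l : List ℕ) : Prop :=
  l.Nodup ∧ ∀ x : ℕ, x ∈ l ↔ x < l.length

/-- Shifted concatenation: the values of `τ`, each shifted up by the size of `σ`, are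
placed first, followed by the values of `σ`. -/
def sc (σ τ : List ℕ) : List ℕ := (τ.map (· + σ.length)) ++ σ

/-- The list is up-down: ascent at each even 0-indexed position, descent at each odd
one. -/
def ListUpDown (l : List ℕ) : Prop :=
  ∀ i : ℕ, i + 1 < l.length →
    (i % 2 = 0 → l.getD i 0 < l.getD (i+1) 0) ∧
    (i % 2 = 1 → l.getD (i+1) 0 < l.getD i 0)

/-- The list avoids the pattern `1234`. -/
def ListAvoids1234 (l : List ℕ) : Prop :=
  ¬ ∃ a b c d : ℕ, a < b ∧ b < c ∧ c < d ∧ d < l.length ∧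
      l.getD a 0 < l.getD b 0 ∧ l.getD b 0 < l.getD c 0 ∧ l.getD c 0 < l.getD d 0

theorem sc_assoc (σ τ υ : List ℕ) : sc (sc σ τ) υ = sc σ (sc τ υ) := by
  simp [sc]

theorem sc_nil_right (σ : List ℕ) : sc σ [] = σ := rfl

theorem sc_nil_left (σ : List ℕ) : sc [] σ = σ := by
  simp [sc]

theorem List.getD_map_of_lt {α β : Type*} {l : List α} (f : α → β) (d : α) (d' : β) {i : ℕ}
    (hi : i < l.length) : (l.map f).getD i d' = f (l.getD i d) := by
  rw [getD_eq_getElem _ _ (by simpa using hi), getElem_map, getD_eq_getElem _ _ hi]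

theorem List.getD_append_lt_getD_append {l₁ l₂ : List ℕ} (hblock : ∀ x ∈ l₁, ∀ y ∈ l₂, y < x)
    {p q : ℕ} (hp : p < l₁.length) (hq : l₁.length ≤ q) (hq' : q < (l₁ ++ l₂).length) :
    (l₁ ++ l₂).getD q 0 < (l₁ ++ l₂).getD p 0 := by
  have hq₂ : q - l₁.length < l₂.length := by simp only [List.length_append] at hq'; omega
  rw [getD_append _ _ _ _ hp, getD_append_right _ _ _ _ hq, getD_eq_getElem _ _ hp,
    getD_eq_getElem _ _ hq₂]
  exact hblock _ (getElem_mem hp) _ (getElem_mem hq₂)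

theorem IsPermList.sc {σ τ : List ℕ} (hσ : IsPermList σ) (hτ : IsPermList τ) :
    IsPermList (sc σ τ) := by
  obtain ⟨hσnd, hσmem⟩ := hσ
  obtain ⟨hτnd, hτmem⟩ := hτ
  refine ⟨?_, fun x => ?_⟩
  · refine List.nodup_append.2 ⟨hτnd.map fun a b h => by omega, hσnd, ?_⟩
    rintro _ hx y hy rfl
    obtain ⟨t, -, rfl⟩ := List.mem_map.1 hx
    have := (hσmem _).1 hy
    omega
  · simp only [_root_.sc, List.mem_append, List.mem_map, List.length_append, List.length_map]
    constructor
    · rintro (⟨t, ht, rfl⟩ | hx)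
      · have := (hτmem t).1 ht; omega
      · have := (hσmem x).1 hx; omega
    · intro hx
      rcases lt_or_ge x σ.length with h | h
      · exact Or.inr ((hσmem x).2 h)
      · exact Or.inl ⟨x - σ.length, (hτmem _).2 (by omega), by omega⟩

theorem ListUpDown.map_strictMono {l : List ℕ} {f : ℕ → ℕ} (h : ListUpDown l)
    (hf : StrictMono f) : ListUpDown (l.map f) := by
  intro i hi
  rw [List.length_map] at hi
  rw [List.getD_map_of_lt f 0 0 (by omega), List.getD_map_of_lt f 0 0 hi]
  exact (h i hi).imp (fun h' hp => hf (h' hp)) (fun h' hp => hf (h' hp))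

theorem ListAvoids1234.map_strictMono {l : List ℕ} {f : ℕ → ℕ} (h : ListAvoids1234 l)
    (hf : StrictMono f) : ListAvoids1234 (l.map f) := by
  rintro ⟨a, b, c, d, hab, hbc, hcd, hd, h₁, h₂, h₃⟩
  rw [List.length_map] at hd
  rw [List.getD_map_of_lt f 0 0 (by omega), List.getD_map_of_lt f 0 0 (by omega)] at h₁ h₂
  rw [List.getD_map_of_lt f 0 0 (by omega), List.getD_map_of_lt f 0 0 hd] at h₃
  exact h ⟨a, b, c, d, hab, hbc, hcd, hd, hf.lt_iff_lt.1 h₁, hf.lt_iff_lt.1 h₂, hf.lt_iff_lt.1 h₃⟩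

theorem ListUpDown.append {l₁ l₂ : List ℕ} (h₁ : ListUpDown l₁) (h₂ : ListUpDown l₂)
    (heven : Even l₁.length) (hblock : ∀ x ∈ l₁, ∀ y ∈ l₂, y < x) : ListUpDown (l₁ ++ l₂) := by
  intro i hi
  obtain ⟨k, hk⟩ := heven
  rcases lt_trichotomy (i + 1) l₁.length with h | h | h
  · rw [List.getD_append _ _ _ _ (by omega), List.getD_append _ _ _ _ h]
    exact h₁ i h
  · exact ⟨fun hpar => by omega,
      fun _ => List.getD_append_lt_getD_append hblock (by omega) (by omega) hi⟩
  · rw [List.getD_append_right _ _ _ _ (by omega), List.getD_append_right _ _ _ _ (by omega),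
      show i + 1 - l₁.length = i - l₁.length + 1 by omega]
    have := h₂ (i - l₁.length) (by simp only [List.length_append] at hi; omega)
    exact ⟨fun hpar => this.1 (by omega), fun hpar => this.2 (by omega)⟩

theorem ListAvoids1234.append {l₁ l₂ : List ℕ} (h₁ : ListAvoids1234 l₁) (h₂ : ListAvoids1234 l₂)
    (hblock : ∀ x ∈ l₁, ∀ y ∈ l₂, y < x) : ListAvoids1234 (l₁ ++ l₂) := by
  rintro ⟨a, b, c, d, hab, hbc, hcd, hd, h₁₂, h₂₃, h₃₄⟩
  have hcross := fun {p q : ℕ} (hp : p < l₁.length) (hq : l₁.length ≤ q) (hqd : q ≤ d) =>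
    (List.getD_append_lt_getD_append hblock hp hq (by omega)).asymm
  rcases lt_or_ge d l₁.length with hd₁ | hd₁
  · rw [List.getD_append _ _ _ _ (by omega), List.getD_append _ _ _ _ (by omega)] at h₁₂ h₂₃
    rw [List.getD_append _ _ _ _ (by omega), List.getD_append _ _ _ _ hd₁] at h₃₄
    exact h₁ ⟨a, b, c, d, hab, hbc, hcd, hd₁, h₁₂, h₂₃, h₃₄⟩
  rcases lt_or_ge a l₁.length with ha₁ | ha₁
  · rcases lt_or_ge b l₁.length with hb₁ | hb₁
    · rcases lt_or_ge c l₁.length with hc₁ | hc₁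
      · exact hcross hc₁ hd₁ le_rfl h₃₄
      · exact hcross hb₁ hc₁ hcd.le h₂₃
    · exact hcross ha₁ hb₁ (by omega) h₁₂
  · rw [List.getD_append_right _ _ _ _ (by omega), List.getD_append_right _ _ _ _ (by omega)]
      at h₁₂ h₂₃ h₃₄
    rw [List.length_append] at hd
    exact h₂ ⟨a - l₁.length, b - l₁.length, c - l₁.length, d - l₁.length,
      by omega, by omega, by omega, by omega, h₁₂, h₂₃, h₃₄⟩

/-- Shifted concatenation is associative, has the empty permutation as a two-sided
identity, and preserves the class of even-size up-down permutations avoiding `1234`. -/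
theorem sc_monoid_and_closure :
    (∀ σ τ υ : List ℕ, sc (sc σ τ) υ = sc σ (sc τ υ)) ∧
    (∀ σ : List ℕ, sc σ [] = σ ∧ sc [] σ = σ) ∧
    (∀ σ τ : List ℕ, IsPermList σ → IsPermList τ →
      Even σ.length → Even τ.length →
      ListUpDown σ → ListAvoids1234 σ → ListUpDown τ → ListAvoids1234 τ →
      IsPermList (sc σ τ) ∧ ListUpDown (sc σ τ) ∧ ListAvoids1234 (sc σ τ)) := by
  refine ⟨sc_assoc, fun σ => ⟨sc_nil_right σ, sc_nil_left σ⟩, ?_⟩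
  intro σ τ hσ hτ _ hτe hσu hσa hτu hτa
  have hshift : StrictMono (· + σ.length) := add_left_strictMono
  have hblock : ∀ x ∈ τ.map (· + σ.length), ∀ y ∈ σ, y < x := by
    rintro _ hx y hy
    obtain ⟨t, -, rfl⟩ := List.mem_map.1 hx
    have := (hσ.2 y).1 hy
    omega
  exact ⟨hσ.sc hτ, (hτu.map_strictMono hshift).append hσu (by simpa using hτe) hblock,
    (hτa.map_strictMono hshift).append hσa hblock⟩
end
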